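/- In Protocol 1, all parties compute the same key: for every i, the value K_i computed in the key-computation step equals φ(h_1 ⊙ h_n, g) · φ(h_2 ⊙ h_1, g) ⋯ φ(h_n ⊙ h_{n-1}, g). In particular the protocol satisfies the correctness condition. -/
import Mathlib


/-- Correctness of the protocol: every party computes the same key
`K_i = φ(h₁⊙hₙ, g)·φ(h₂⊙h₁, g)⋯φ(hₙ⊙h_{n-1}, g)`. -/
theorem protocol_correctness (G H : Type) [Group G] [Group H]
    (n : ℕ) (hn : 1 ≤ n)
    (φ : H → G → G)
    (hφ1 : ∀ x : G, φ 1 x = x)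
    (hφ2 : ∀ (h₂ h₁ : H) (x : G), φ h₂ (φ h₁ x) = φ (h₂ * h₁) x)
    (g : G) (h : ZMod n → H)
    (v X Y Z : ZMod n → G)
    (hv : ∀ i, v i = φ (h i) g)
    (hX : ∀ i, X i = φ (h i) (v (i - 1)))
    (hY : ∀ i, Y i = φ (h (i + 1) * h i) g)
    (hZ : ∀ i, Z i = (X i)⁻¹ * Y i)
    (A : ZMod n → ZMod n → G)
    (hA1 : ∀ i, A i 1 = X i)
    (hAs : ∀ i : ZMod n, ∀ k : ℕ, 1 ≤ k → k < n →
      A i ((k + 1 : ℕ) : ZMod n) = A i ((k : ℕ) : ZMod n) * Z (i + (k : ZMod n) - 1))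
    (σ : ZMod n → ZMod n) (hσ : ∀ j, σ j = j - 1)
    (K : ℕ → G)
    (hK : ∀ i : ℕ, K i =
      ((List.range n).map
        (fun k => A (i : ZMod n) (σ^[i - 1] ((k + 1 : ℕ) : ZMod n)))).prod) :
    ∀ i : ℕ, 1 ≤ i → i ≤ n →
      K i = ((List.range n).map
        (fun k => φ (h ((k + 1 : ℕ) : ZMod n) * h (((k + 1 : ℕ) : ZMod n) - 1)) g)).prod := by

  haveI : NeZero n := ⟨by omega⟩
  have hXφ : ∀ j : ZMod n, X j = φ (h j * h (j - 1)) g := by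
    intro j; rw [hX, hv, hφ2]
  have hYX : ∀ j : ZMod n, Y j = X (j + 1) := by
    intro j
    rw [hY, hXφ]
    congr 2
    ring
  have key : ∀ r : ℕ, 1 ≤ r → r ≤ n → ∀ i : ZMod n,
      A i ((r : ℕ) : ZMod n) = X (i + (r : ZMod n) - 1) := by
    intro r hr1
    induction r, hr1 using Nat.le_induction with
    | base =>
      intro _ i
      simpa using hA1 i
    | succ r hr ih =>
      intro hrn i
      have hrlt : r < n := by omega
      rw [hAs i r hr hrlt, ih (by omega) i, hZ, hYX]
      have e1 : (i + (r : ZMod n) - 1) + 1 = i + ((r + 1 : ℕ) : ZMod n) - 1 := by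
        push_cast; ring
      rw [e1]
      group
  have hiter : ∀ (t : ℕ) (m : ZMod n), σ^[t] m = m - (t : ZMod n) := by
    intro t
    induction t with
    | zero => intro m; simp
    | succ t ih =>
      intro m
      rw [Function.iterate_succ_apply, hσ, ih]
      push_cast; ring
  have hAX : ∀ (i m : ZMod n), A i m = X (i + m - 1) := by
    intro i m
    obtain ⟨r, hr1, hrn, hrm⟩ : ∃ r : ℕ, 1 ≤ r ∧ r ≤ n ∧ (r : ZMod n) = m := by
      by_cases h0 : m = 0
      · exact ⟨n, hn, le_refl n, by simp [h0]⟩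
      · refine ⟨m.val, ?_, (ZMod.val_lt m).le, by rw [ZMod.natCast_val, ZMod.cast_id]⟩
        exact Nat.pos_of_ne_zero (fun e => h0 ((ZMod.val_eq_zero m).mp e))
    subst hrm
    exact key r hr1 hrn i
  intro i hi1 hin
  rw [hK]
  have hfun : (fun k : ℕ => A (i : ZMod n) (σ^[i - 1] ((k + 1 : ℕ) : ZMod n)))
      = (fun k : ℕ => φ (h ((k + 1 : ℕ) : ZMod n) * h (((k + 1 : ℕ) : ZMod n) - 1)) g) := by
    funext k
    rw [hiter, hAX, hXφ]
    have hab : (i : ZMod n) + (((k + 1 : ℕ) : ZMod n) - ((i - 1 : ℕ) : ZMod n)) - 1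
        = ((k + 1 : ℕ) : ZMod n) := by
      rw [Nat.cast_sub hi1]
      push_cast; ring
    rw [hab]
  rw [hfun]
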